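/- arXiv:0902.1267 — 5 statements merged into one kernel-verified Lean document; each statement's English description precedes it below -/
import Mathlib

section
/- If p ≡ 1 (mod 4), then T_w is conjugate in SL_2(F_p) to the standard diagonal torus A: there exists s ∈ SL_2(F_p) such that T_w = { s·d·s⁻¹ : d ∈ A }. -/
/-!
Since `p ≡ 1 (mod 4)`, `𝔽_p` contains a square root `i` of `-1`. Over any field of characteristic
`≠ 2` containing `i`, every rotation `[[a, -b], [b, a]]` has the eigenvectors `(1, -i)` and
`(1, i)`, with eigenvalues `a + i b` and `a - i b`, whose product is `a² + b²`. Scaling the second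
eigenvector to `(-i/2, 1/2)` gives a basis matrix of determinant `1` that conjugates
`diag(a + i b, a - i b)` to the rotation. On the circle `a² + b² = 1` these eigenvalues are
`c, c⁻¹` with `c ≠ 0`, and every such pair arises, from `a = (c + c⁻¹)/2`, `b = i (c⁻¹ - c)/2`.
-/

namespace Matrix.SpecialLinearGroup

variable {K : Type*} [Field K] {i : K}

def rotationEigenbasis (h2 : (2 : K) ≠ 0) (hi : i * i = -1) : SpecialLinearGroup (Fin 2) K :=
  ⟨!![1, -i / 2; -i, 1 / 2], by
    rw [det_fin_two_of]
    field_simp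
    linear_combination -hi⟩

@[simp]
theorem coe_rotationEigenbasis (h2 : (2 : K) ≠ 0) (hi : i * i = -1) :
    (rotationEigenbasis h2 hi : Matrix (Fin 2) (Fin 2) K) = !![1, -i / 2; -i, 1 / 2] :=
  rfl

theorem rotationEigenbasis_mul_diagonal_mul_inv (h2 : (2 : K) ≠ 0) (hi : i * i = -1)
    {g d : SpecialLinearGroup (Fin 2) K} {a b : K}
    (hg : (g : Matrix (Fin 2) (Fin 2) K) = !![a, -b; b, a])
    (hd : (d : Matrix (Fin 2) (Fin 2) K) = !![a + i * b, 0; 0, a - i * b]) :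
    rotationEigenbasis h2 hi * d * (rotationEigenbasis h2 hi)⁻¹ = g := by
  rw [mul_inv_eq_iff_eq_mul]
  apply Subtype.ext
  simp only [coe_mul, hg, hd, coe_rotationEigenbasis]
  rw [mul_fin_two, mul_fin_two]
  ext j k
  fin_cases j <;> fin_cases k <;> simp only [Fin.zero_eta, Fin.mk_one, of_apply, cons_val',
    cons_val_zero, cons_val_one, cons_val_fin_one]
  · ring
  · linear_combination (b / 2) * hi
  · linear_combination -b * hi
  · ring

theorem exists_sq_add_sq_eq_one_of_mul_eq_one (h2 : (2 : K) ≠ 0) (hi : i * i = -1) {x y : K}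
    (hxy : x * y = 1) : ∃ a b : K, a ^ 2 + b ^ 2 = 1 ∧ a + i * b = x ∧ a - i * b = y := by
  refine ⟨(x + y) / 2, i * (y - x) / 2, ?_, ?_, ?_⟩
  · field_simp
    linear_combination (y - x) ^ 2 * hi + 4 * hxy
  · field_simp
    linear_combination (y - x) * hi
  · field_simp
    linear_combination (x - y) * hi

theorem rotations_eq_image_conj_diagonal (h2 : (2 : K) ≠ 0) (hi : i * i = -1) :
    {g : SpecialLinearGroup (Fin 2) K |
        ∃ a b : K, a ^ 2 + b ^ 2 = 1 ∧ (g : Matrix (Fin 2) (Fin 2) K) = !![a, -b; b, a]} =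
      (fun d => rotationEigenbasis h2 hi * d * (rotationEigenbasis h2 hi)⁻¹) ''
        {d : SpecialLinearGroup (Fin 2) K |
          ∃ c : K, c ≠ 0 ∧ (d : Matrix (Fin 2) (Fin 2) K) = !![c, 0; 0, c⁻¹]} := by
  ext g
  constructor
  · rintro ⟨a, b, hab, hg⟩
    have hnorm : (a + i * b) * (a - i * b) = 1 := by linear_combination hab - b ^ 2 * hi
    let d : SpecialLinearGroup (Fin 2) K :=
      ⟨!![a + i * b, 0; 0, a - i * b], by rw [det_fin_two_of]; linear_combination hnorm⟩
    refine ⟨d, ⟨a + i * b, left_ne_zero_of_mul_eq_one hnorm, ?_⟩,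
      rotationEigenbasis_mul_diagonal_mul_inv h2 hi hg rfl⟩
    simp [d, inv_eq_of_mul_eq_one_right hnorm]
  · rintro ⟨d, ⟨c, hc, hd⟩, rfl⟩
    obtain ⟨a, b, hab, hplus, hminus⟩ :=
      exists_sq_add_sq_eq_one_of_mul_eq_one h2 hi (mul_inv_cancel₀ hc)
    let g : SpecialLinearGroup (Fin 2) K :=
      ⟨!![a, -b; b, a], by rw [det_fin_two_of]; linear_combination hab⟩
    exact ⟨a, b, hab, congrArg Subtype.val <|
      rotationEigenbasis_mul_diagonal_mul_inv h2 hi (g := g) rfl (by rw [hd, hplus, hminus])⟩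

end Matrix.SpecialLinearGroup

theorem Tw_conjugate_to_diagonal_torus_general (p : ℕ) [Fact p.Prime]
    (hp4 : p % 4 = 1) :
    ∃ s : Matrix.SpecialLinearGroup (Fin 2) (ZMod p),
      {g : Matrix.SpecialLinearGroup (Fin 2) (ZMod p) |
        ∃ a b : ZMod p, a ^ 2 + b ^ 2 = 1 ∧
          (g : Matrix (Fin 2) (Fin 2) (ZMod p)) = !![a, -b; b, a]} =
      (fun d => s * d * s⁻¹) ''
        {d : Matrix.SpecialLinearGroup (Fin 2) (ZMod p) |
          ∃ a : ZMod p, a ≠ 0 ∧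
            (d : Matrix (Fin 2) (Fin 2) (ZMod p)) = !![a, 0; 0, a⁻¹]} := by
  have h2 : (2 : ZMod p) ≠ 0 := Ring.two_ne_zero (by rw [ZMod.ringChar_zmod_n]; omega)
  obtain ⟨i, hi⟩ : IsSquare (-1 : ZMod p) := ZMod.exists_sq_eq_neg_one_iff.mpr (by omega)
  exact ⟨_, Matrix.SpecialLinearGroup.rotations_eq_image_conj_diagonal h2 hi.symm⟩

/-- If p ≡ 1 (mod 4), then T_w is conjugate in SL_2(F_p) to the standard
diagonal torus A: there is s ∈ SL_2(F_p) with T_w = { s·d·s⁻¹ : d ∈ A }. -/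
theorem Tw_conjugate_to_diagonal_torus (p : ℕ) [Fact p.Prime] (hodd : Odd p)
    (hp4 : p % 4 = 1) :
    ∃ s : Matrix.SpecialLinearGroup (Fin 2) (ZMod p),
      {g : Matrix.SpecialLinearGroup (Fin 2) (ZMod p) |
        ∃ a b : ZMod p, a ^ 2 + b ^ 2 = 1 ∧
          (g : Matrix (Fin 2) (Fin 2) (ZMod p)) = !![a, -b; b, a]} =
      (fun d => s * d * s⁻¹) ''
        {d : Matrix.SpecialLinearGroup (Fin 2) (ZMod p) |
          ∃ a : ZMod p, a ≠ 0 ∧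
            (d : Matrix (Fin 2) (Fin 2) (ZMod p)) = !![a, 0; 0, a⁻¹]} :=
  Tw_conjugate_to_diagonal_torus_general p hp4
end

section
/- The matrix s = [[1, 2⁻¹a^k],[a^k, 2⁻¹]] has determinant 1 (so s ∈ SL_2(F_p)), and the element t = s·[[a,0],[0,a⁻¹]]·s⁻¹ belongs to T_w. -/
/-!
Put `ω = a ^ k`; since `a` has order `p - 1 = 4k`, `ω` is a primitive fourth root of unity, so
`ω ^ 2 = -1`. This gives `det s = 2⁻¹ - 2⁻¹ ω² = 1`, and one checks directly that `s` intertwines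
`diag(x, x⁻¹)` with the rotation of "cosine" `b = (x + x⁻¹) / 2` and "sine" `c = ω (x - x⁻¹) / 2`,
whose norm is `b² + c² = ((x + x⁻¹)² - (x - x⁻¹)²) / 4 = 1`.
-/

open Matrix

theorem IsPrimitiveRoot.pow_div_four_sq_eq_neg_one {R : Type*} [CommRing R] [NoZeroDivisors R]
    {ζ : R} {n : ℕ} (h : IsPrimitiveRoot ζ n) (hn : 0 < n) (h4 : 4 ∣ n) :
    (ζ ^ (n / 4)) ^ 2 = -1 := by
  rw [← pow_mul]
  exact (h.pow hn (by omega)).eq_neg_one_of_two_right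

section SqrtNegOne

variable {F : Type*} [Field F] {ω : F}

theorem det_eq_one_of_sq_eq_neg_one (hω : ω ^ 2 = -1) (h2 : (2 : F) ≠ 0) :
    !![1, 2⁻¹ * ω; ω, 2⁻¹].det = 1 := by
  rw [det_fin_two_of]
  field_simp
  linear_combination -hω

theorem mul_diagonal_eq_rotation_mul (hω : ω ^ 2 = -1) (h2 : (2 : F) ≠ 0) {x : F} (hx : x ≠ 0) :
    !![1, 2⁻¹ * ω; ω, 2⁻¹] * !![x, 0; 0, x⁻¹] =
      !![2⁻¹ * (x + x⁻¹), -(2⁻¹ * ω * (x - x⁻¹)); 2⁻¹ * ω * (x - x⁻¹), 2⁻¹ * (x + x⁻¹)] *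
        !![1, 2⁻¹ * ω; ω, 2⁻¹] := by
  rw [mul_fin_two, mul_fin_two, Matrix.of.injective.eq_iff]
  simp only [vecCons_inj, and_true]
  refine ⟨⟨?_, ?_⟩, ?_, ?_⟩ <;> field_simp <;> grind

theorem rotation_sq_add_sq_eq_one (hω : ω ^ 2 = -1) (h2 : (2 : F) ≠ 0) {x : F} (hx : x ≠ 0) :
    (2⁻¹ * (x + x⁻¹)) ^ 2 + (2⁻¹ * ω * (x - x⁻¹)) ^ 2 = 1 := by
  field_simp
  linear_combination (x ^ 2 - 1) ^ 2 * hω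

end SqrtNegOne

/-- The matrix s = [[1, 2⁻¹a^k],[a^k, 2⁻¹]] has determinant 1, and
t = s·[[a,0],[0,a⁻¹]]·s⁻¹ belongs to T_w. -/
theorem s_det_one_and_t_mem_Tw (p : ℕ) [Fact p.Prime] (hp4 : p % 4 = 1)
    (a : ZMod p) (ha : orderOf a = p - 1)
    (k : ℕ) (hk : k = (p - 1) / 4)
    (s g : Matrix (Fin 2) (Fin 2) (ZMod p))
    (hs : s = !![1, 2⁻¹ * a ^ k; a ^ k, 2⁻¹])
    (hg : g = !![a, 0; 0, a⁻¹]) :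
    s.det = 1 ∧
    ∃ b c : ZMod p, b ^ 2 + c ^ 2 = 1 ∧ s * g * s⁻¹ = !![b, -c; c, b] := by
  have hp2 : 2 ≤ p := Nat.Prime.two_le Fact.out
  have hprim : IsPrimitiveRoot a (p - 1) := IsPrimitiveRoot.iff_orderOf.mpr ha
  have ha0 : a ≠ 0 := hprim.ne_zero (by omega)
  have hω : (a ^ k) ^ 2 = -1 := hk ▸ hprim.pow_div_four_sq_eq_neg_one (by omega) (by omega)
  have h2 : (2 : ZMod p) ≠ 0 := Ring.two_ne_zero (by rw [ZMod.ringChar_zmod_n]; omega)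
  have hdet : s.det = 1 := hs ▸ det_eq_one_of_sq_eq_neg_one hω h2
  refine ⟨hdet, _, _, rotation_sq_add_sq_eq_one hω h2 ha0, ?_⟩
  rw [hg, hs, mul_diagonal_eq_rotation_mul hω h2 ha0,
    mul_nonsing_inv_cancel_right _ _ (by rw [← hs, hdet]; exact isUnit_one)]
end

section
/- The element t = s·[[a,0],[0,a⁻¹]]·s⁻¹, where s = [[1, 2⁻¹a^k],[a^k, 2⁻¹]], has order p−1 and generates the group T_w: the cyclic subgroup generated by t equals T_w. -/
/-!
Put `i = a ^ k`, a square root of `-1`. Conjugation by `s` carries the diagonal torus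
`diag(u, u⁻¹)` onto `T_w`: the conjugate of `diag(u, u⁻¹)` is the rotation `[[x, -y], [y, x]]`
with `x = (u + u⁻¹) / 2`, `y = i (u - u⁻¹) / 2`, and conversely `u = x - i y` recovers `u` from a
rotation, since `(x - i y) (x + i y) = x² + y²`. So `u ↦ s diag(u, u⁻¹) s⁻¹` is an isomorphism
`F_pˣ ≃* T_w` sending the generator `a` to `t`.
-/

namespace Matrix.SpecialLinearGroup

section CommRing

variable {R : Type*} [CommRing R]

def diagonalUnits : Rˣ →* SpecialLinearGroup (Fin 2) R where
  toFun u := ⟨!![(u : R), 0; 0, ↑u⁻¹], by simp⟩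
  map_one' := Subtype.ext <| by simp [one_fin_two]
  map_mul' u v := Subtype.ext <| by
    change _ = !![(u : R), 0; 0, ↑u⁻¹] * !![(v : R), 0; 0, ↑v⁻¹]
    simp [mul_comm]

@[simp]
theorem coe_diagonalUnits (u : Rˣ) :
    (diagonalUnits u : Matrix (Fin 2) (Fin 2) R) = !![(u : R), 0; 0, ↑u⁻¹] :=
  rfl

theorem diagonalUnits_injective : Function.Injective (diagonalUnits (R := R)) := by
  intro u v h
  have h00 := congr_fun₂ (congrArg Subtype.val h) 0 0
  exact Units.ext (by simpa using h00)

end CommRing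

section Field

variable {F : Type*} [Field F] {i : F} {s : SpecialLinearGroup (Fin 2) F}

theorem coe_conj_diagonalUnits (hi : i ^ 2 = -1)
    (hs : (s : Matrix (Fin 2) (Fin 2) F) = !![1, 2⁻¹ * i; i, 2⁻¹]) (u : Fˣ) :
    ((s * diagonalUnits u * s⁻¹ : SpecialLinearGroup (Fin 2) F) : Matrix (Fin 2) (Fin 2) F) =
      !![((u : F) + (u : F)⁻¹) * 2⁻¹, -(i * ((u : F) - (u : F)⁻¹) * 2⁻¹);
        i * ((u : F) - (u : F)⁻¹) * 2⁻¹, ((u : F) + (u : F)⁻¹) * 2⁻¹] := by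
  rw [coe_mul, coe_mul, coe_inv, hs, adjugate_fin_two, coe_diagonalUnits]
  ext m n
  fin_cases m <;> fin_cases n <;> simp
  · linear_combination (-(2⁻¹ * (u : F)⁻¹)) * hi
  · ring
  · ring
  · linear_combination (-(2⁻¹ * (u : F))) * hi

theorem mem_range_conj_comp_diagonalUnits_iff (h2 : (2 : F) ≠ 0) (hi : i ^ 2 = -1)
    (hs : (s : Matrix (Fin 2) (Fin 2) F) = !![1, 2⁻¹ * i; i, 2⁻¹])
    (g : SpecialLinearGroup (Fin 2) F) :
    g ∈ ((MulAut.conj s).toMonoidHom.comp diagonalUnits).range ↔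
      ∃ x y : F, x ^ 2 + y ^ 2 = 1 ∧ (g : Matrix (Fin 2) (Fin 2) F) = !![x, -y; y, x] := by
  have h2' : (2 : F) * 2⁻¹ = 1 := mul_inv_cancel₀ h2
  constructor
  · rintro ⟨u, rfl⟩
    have hu : (u : F) * (u : F)⁻¹ = 1 := mul_inv_cancel₀ u.ne_zero
    refine ⟨((u : F) + (u : F)⁻¹) * 2⁻¹, i * ((u : F) - (u : F)⁻¹) * 2⁻¹, ?_,
      coe_conj_diagonalUnits hi hs u⟩
    linear_combination (((u : F) - (u : F)⁻¹) ^ 2 * 2⁻¹ ^ 2) * hi + 4 * 2⁻¹ ^ 2 * hu +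
      (2 * 2⁻¹ + 1) * h2'
  · rintro ⟨x, y, hxy, hg⟩
    have hu : (x - i * y) * (x + i * y) = 1 := by linear_combination hxy - y ^ 2 * hi
    let u : Fˣ := Units.mkOfMulEqOne _ _ hu
    refine ⟨u, Subtype.ext ?_⟩
    change ((s * diagonalUnits u * s⁻¹ : SpecialLinearGroup (Fin 2) F) :
      Matrix (Fin 2) (Fin 2) F) = g
    rw [coe_conj_diagonalUnits hi hs, hg, Units.val_mkOfMulEqOne, inv_eq_of_mul_eq_one_right hu]
    ext m n
    fin_cases m <;> fin_cases n <;> simp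
    · linear_combination x * h2'
    · linear_combination (-(y * 2 * 2⁻¹)) * hi + y * h2'
    · linear_combination (-(y * 2 * 2⁻¹)) * hi + y * h2'
    · linear_combination x * h2'

end Field

end Matrix.SpecialLinearGroup

open Matrix.SpecialLinearGroup in
/-- t = s·[[a,0],[0,a⁻¹]]·s⁻¹ with s = [[1, 2⁻¹a^k],[a^k, 2⁻¹]] has
order p−1 and generates T_w. -/
theorem t_generates_Tw (p : ℕ) [Fact p.Prime] (hp4 : p % 4 = 1)
    (a : ZMod p) (ha : orderOf a = p - 1)
    (k : ℕ) (hk : k = (p - 1) / 4)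
    (T : Subgroup (Matrix.SpecialLinearGroup (Fin 2) (ZMod p)))
    (hT : ∀ g : Matrix.SpecialLinearGroup (Fin 2) (ZMod p),
      g ∈ T ↔ ∃ x y : ZMod p, x ^ 2 + y ^ 2 = 1 ∧
        (g : Matrix (Fin 2) (Fin 2) (ZMod p)) = !![x, -y; y, x])
    (s g t : Matrix.SpecialLinearGroup (Fin 2) (ZMod p))
    (hs : (s : Matrix (Fin 2) (Fin 2) (ZMod p)) = !![1, 2⁻¹ * a ^ k; a ^ k, 2⁻¹])
    (hg : (g : Matrix (Fin 2) (Fin 2) (ZMod p)) = !![a, 0; 0, a⁻¹])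
    (ht : t = s * g * s⁻¹) :
    orderOf t = p - 1 ∧ Subgroup.zpowers t = T := by
  have hp5 : 5 ≤ p := by have := (Fact.out : p.Prime).two_le; omega
  have ha0 : a ≠ 0 := (IsPrimitiveRoot.orderOf a).ne_zero (by omega)
  have hi : (a ^ k) ^ 2 = -1 := by
    rw [← pow_mul]
    exact ((IsPrimitiveRoot.orderOf a).pow (by omega) (by omega)).eq_neg_one_of_two_right
  have h2 : (2 : ZMod p) ≠ 0 := Ring.two_ne_zero (by rw [ZMod.ringChar_zmod_n]; omega)
  set φ := (MulAut.conj s).toMonoidHom.comp diagonalUnits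
  set u := Units.mk0 a ha0
  have ht' : t = φ u := by
    rw [ht, show g = diagonalUnits u from Subtype.ext (by simp [u, hg])]
    rfl
  have hφ : Function.Injective φ := (MulAut.conj s).injective.comp diagonalUnits_injective
  have hu : orderOf u = p - 1 := by rw [← orderOf_units, Units.val_mk0, ha]
  have hu_top : Subgroup.zpowers u = ⊤ := Subgroup.eq_top_of_card_eq _ <| by
    rw [Nat.card_zpowers, hu, Nat.card_eq_fintype_card, ZMod.card_units]
  refine ⟨by rw [ht', orderOf_injective φ hφ, hu], ?_⟩
  ext g'
  rw [ht', ← MonoidHom.map_zpowers, hu_top, ← MonoidHom.range_eq_map, hT,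
    mem_range_conj_comp_diagonalUnits_iff h2 hi hs]
end

section
/- The family Φ_p = {φ_x : 0 ≤ x ≤ p−1} is an orthonormal basis of the p-dimensional complex Hilbert space ℂ(F_p), and every φ_x is an eigenvector of the discrete Fourier transform F. -/
/-!
Let `ψ z = η ^ z` be the standard additive character of `𝔽_p`, `c = a ^ k` (a square root of
`-1`, as `a` has order `4k`) and `χ_x z = θ ^ (x log_a z)`, `χ_x 0 = 0`, the multiplicative
characters. Then `φ_x = K g_x` for the chirp matrix `K i j = ψ (c (j - i)² - c i² / 2) / √p`,
with `g_0 = δ_0` and `g_x = χ_x / √(p - 1)` for `x ≠ 0`.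

Orthogonality of additive characters makes `K` unitary, and `δ_0` together with the normalised
characters `χ_1, …, χ_{p-1}` is orthonormal, so the `φ_x` are orthonormal. Completing the square
in the Gauss sum `G = ∑ ψ (c i² / 2)` gives `F (K g) = (G / √p) K (z ↦ g (-c z))`, and each
`g_x` is an eigenvector of the dilation by `-c` because `χ_x` is multiplicative, so `φ_x = K g_x`
is an eigenvector of `F`.
-/

open Finset Matrix ComplexConjugate

theorem IsPrimitiveRoot.pow_eq_pow_iff_modEq {M : Type*} [CommMonoid M] {ζ : M} {n : ℕ}
    (hζ : IsPrimitiveRoot ζ n) (hn : n ≠ 0) {x y : ℕ} : ζ ^ x = ζ ^ y ↔ x ≡ y [MOD n] := by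
  rw [hζ.eq_orderOf, (hζ.isOfFinOrder hn).pow_eq_pow_iff_modEq]

theorem IsPrimitiveRoot.pow_sq_eq_neg_one {R : Type*} [CommRing R] [IsDomain R] {ζ : R} {k : ℕ}
    (hζ : IsPrimitiveRoot ζ (4 * k)) (hk : 0 < k) : (ζ ^ k) ^ 2 = -1 := by
  rw [← pow_mul]
  exact (hζ.pow (by omega) (by ring : 4 * k = k * 2 * 2)).eq_neg_one_of_two_right

theorem IsPrimitiveRoot.sum_conj_pow_mul_pow {ζ : ℂ} {n : ℕ} (hζ : IsPrimitiveRoot ζ n)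
    (x y : ℕ) :
    ∑ t ∈ range n, conj (ζ ^ (x * t)) * ζ ^ (y * t) = if x ≡ y [MOD n] then (n : ℂ) else 0 := by
  rcases Nat.eq_zero_or_pos n with rfl | hn
  · simp
  have hconj : conj ζ = ζ⁻¹ :=
    (Complex.inv_eq_conj (Complex.norm_eq_one_of_pow_eq_one hζ.pow_eq_one hn.ne')).symm
  have hterm : ∀ t, conj (ζ ^ (x * t)) * ζ ^ (y * t) = (ζ ^ y / ζ ^ x) ^ t := fun t => by
    rw [map_pow, hconj, div_pow, inv_pow, ← pow_mul, ← pow_mul, div_eq_inv_mul, mul_comm x,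
      mul_comm y]
  simp_rw [hterm]
  have hζ0 : ζ ^ x ≠ 0 := pow_ne_zero _ (hζ.ne_zero hn.ne')
  split_ifs with hxy
  · simp [(hζ.pow_eq_pow_iff_modEq hn.ne').2 hxy.symm, hζ0]
  · have hne : ζ ^ y / ζ ^ x ≠ 1 := fun h =>
      hxy ((hζ.pow_eq_pow_iff_modEq hn.ne').1 ((div_eq_one_iff_eq hζ0).1 h)).symm
    rw [geom_sum_eq hne, div_pow, ← pow_mul, ← pow_mul, mul_comm y, mul_comm x, pow_mul,
      pow_mul, hζ.pow_eq_one, one_pow, one_pow, div_one, sub_self, zero_div]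

theorem AddChar.sum_quadratic_add_linear {𝔽 R : Type*} [Field 𝔽] [Fintype 𝔽] [CommSemiring R]
    (ψ : AddChar 𝔽 R) {a : 𝔽} (ha : a ≠ 0) (h2 : (2 : 𝔽) ≠ 0) (b : 𝔽) :
    ∑ x, ψ (a * x ^ 2 + b * x) = ψ (-(b ^ 2 / (4 * a))) * ∑ x, ψ (a * x ^ 2) := by
  rw [mul_sum]
  refine Fintype.sum_equiv (Equiv.addRight (b / (2 * a))) _ _ fun x => ?_
  rw [← AddChar.map_add_eq_mul, Equiv.coe_addRight]
  have h4 : (4 : 𝔽) ≠ 0 := by simpa [show (4 : 𝔽) = 2 * 2 by norm_num] using mul_ne_zero h2 h2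
  congr 1
  field_simp
  ring

theorem ZMod.stdAddChar_eq_exp_pow_val {N : ℕ} [NeZero N] (z : ZMod N) :
    ZMod.stdAddChar z = Complex.exp (2 * Real.pi * Complex.I / N) ^ z.val := by
  rw [ZMod.stdAddChar_apply, ZMod.toCircle_apply, ← Complex.exp_nat_mul]
  ring_nf

theorem Complex.one_div_sqrt_mul_one_div_sqrt (n : ℕ) :
    (1 / Real.sqrt n : ℂ) * (1 / Real.sqrt n : ℂ) = 1 / n := by
  rw [div_mul_div_comm, one_mul, ← Complex.ofReal_mul, Real.mul_self_sqrt n.cast_nonneg,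
    Complex.ofReal_natCast]

theorem Complex.conj_one_div_sqrt (n : ℕ) : conj (1 / Real.sqrt n : ℂ) = 1 / Real.sqrt n := by
  rw [map_div₀, map_one, Complex.conj_ofReal]

theorem Matrix.inner_toLp_mulVec_toLp_mulVec {𝕜 n : Type*} [RCLike 𝕜] [Fintype n]
    [DecidableEq n] {U : Matrix n n 𝕜} (hU : U ∈ unitaryGroup n 𝕜) (u v : n → 𝕜) :
    inner 𝕜 (WithLp.toLp 2 (U *ᵥ u)) (WithLp.toLp 2 (U *ᵥ v)) =
      inner 𝕜 (WithLp.toLp 2 u) (WithLp.toLp 2 v) := by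
  rw [EuclideanSpace.inner_toLp_toLp, EuclideanSpace.inner_toLp_toLp, star_mulVec,
    dotProduct_comm, dotProduct_mulVec, vecMul_vecMul, ← star_eq_conjTranspose,
    mem_unitaryGroup_iff'.1 hU, vecMul_one, dotProduct_comm]

namespace FourierEigenbasis

section Chirp

variable {𝔽 : Type*} [Field 𝔽] [Fintype 𝔽]

noncomputable def fourierMatrix (ψ : AddChar 𝔽 ℂ) : Matrix 𝔽 𝔽 ℂ :=
  of fun j i => (1 / Real.sqrt (Fintype.card 𝔽) : ℂ) * ψ (i * j)

noncomputable def chirpMatrix (ψ : AddChar 𝔽 ℂ) (c : 𝔽) : Matrix 𝔽 𝔽 ℂ :=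
  of fun i j => (1 / Real.sqrt (Fintype.card 𝔽) : ℂ) * ψ (c * (j - i) ^ 2 - 2⁻¹ * c * i ^ 2)

theorem chirpMatrix_mem_unitaryGroup [DecidableEq 𝔽] {ψ : AddChar 𝔽 ℂ} (hψ : ψ.IsPrimitive)
    {c : 𝔽} (hc : 2 * c ≠ 0) : chirpMatrix ψ c ∈ unitaryGroup 𝔽 ℂ := by
  rw [mem_unitaryGroup_iff']
  ext j j'
  have hexp : ∀ i, -(c * (j - i) ^ 2 - 2⁻¹ * c * i ^ 2) + (c * (j' - i) ^ 2 - 2⁻¹ * c * i ^ 2) =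
      c * (j' ^ 2 - j ^ 2) + i * (2 * c * (j - j')) := fun i => by ring
  simp only [star_eq_conjTranspose, mul_apply, conjTranspose_apply, chirpMatrix, of_apply,
    RCLike.star_def, map_mul, ← AddChar.map_neg_eq_conj, Complex.conj_one_div_sqrt]
  have hterm : ∀ i, 1 / (Real.sqrt (Fintype.card 𝔽) : ℂ) *
      ψ (-(c * (j - i) ^ 2 - 2⁻¹ * c * i ^ 2)) *
      (1 / (Real.sqrt (Fintype.card 𝔽) : ℂ) * ψ (c * (j' - i) ^ 2 - 2⁻¹ * c * i ^ 2)) =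
      1 / Fintype.card 𝔽 * ψ (c * (j' ^ 2 - j ^ 2)) * ψ (i * (2 * c * (j - j'))) := fun i => by
    rw [← Complex.one_div_sqrt_mul_one_div_sqrt, mul_assoc _ (ψ _) (ψ _),
      ← AddChar.map_add_eq_mul, ← hexp, AddChar.map_add_eq_mul]
    ring
  simp only [hterm, ← mul_sum, AddChar.sum_mulShift _ hψ, mul_eq_zero, hc, false_or,
    sub_eq_zero, one_apply]
  split_ifs with h
  · subst h
    simp
  · simp

theorem sum_addChar_mul_chirp_eq {R : Type*} [CommSemiring R] (ψ : AddChar 𝔽 R) {c : 𝔽}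
    (hc : c ^ 2 = -1) (h2 : (2 : 𝔽) ≠ 0) (j m : 𝔽) :
    ∑ i, ψ (i * m) * ψ (c * (j - i) ^ 2 - 2⁻¹ * c * i ^ 2) =
      ψ (c * (c * j - m) ^ 2 - 2⁻¹ * c * m ^ 2) * ∑ i, ψ (2⁻¹ * c * i ^ 2) := by
  have hc0 : c ≠ 0 := by rintro rfl; simp at hc
  have h22 : (2 : 𝔽) * 2⁻¹ = 1 := mul_inv_cancel₀ h2
  calc ∑ i, ψ (i * m) * ψ (c * (j - i) ^ 2 - 2⁻¹ * c * i ^ 2)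
      = ∑ i, ψ (c * j ^ 2) * ψ (2⁻¹ * c * i ^ 2 + (m - 2 * c * j) * i) := by
        refine sum_congr rfl fun i _ => ?_
        rw [← AddChar.map_add_eq_mul, ← AddChar.map_add_eq_mul]
        congr 1
        linear_combination (-(c * i ^ 2)) * h22
    _ = ψ (c * j ^ 2) *
          (ψ (-((m - 2 * c * j) ^ 2 / (4 * (2⁻¹ * c)))) * ∑ i, ψ (2⁻¹ * c * i ^ 2)) := by
        rw [← mul_sum,
          AddChar.sum_quadratic_add_linear ψ (mul_ne_zero (inv_ne_zero h2) hc0) h2]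
    _ = ψ (c * (c * j - m) ^ 2 - 2⁻¹ * c * m ^ 2) * ∑ i, ψ (2⁻¹ * c * i ^ 2) := by
        rw [← mul_assoc, ← AddChar.map_add_eq_mul]
        have hinv : (4 * (2⁻¹ * c))⁻¹ = -(2⁻¹ * c) := inv_eq_of_mul_eq_one_right <| by
          linear_combination (-4 * (2⁻¹ : 𝔽) ^ 2) * hc + (2 * 2⁻¹ + 1) * h22
        congr 2
        rw [div_eq_mul_inv, hinv]
        linear_combination (c * m ^ 2 - 2 * c ^ 2 * j * m + 2 * c ^ 3 * j ^ 2) * h22 +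
          (c * j ^ 2) * hc

theorem fourierMatrix_mulVec_chirpMatrix_mulVec (ψ : AddChar 𝔽 ℂ) {c : 𝔽} (hc : c ^ 2 = -1)
    (h2 : (2 : 𝔽) ≠ 0) (g : 𝔽 → ℂ) :
    fourierMatrix ψ *ᵥ (chirpMatrix ψ c *ᵥ g) =
      ((1 / Real.sqrt (Fintype.card 𝔽) : ℂ) * ∑ i, ψ (2⁻¹ * c * i ^ 2)) •
        chirpMatrix ψ c *ᵥ fun z => g (-c * z) := by
  have hc0 : c ≠ 0 := by rintro rfl; simp at hc
  have hcc : ∀ j, -c * (c * j) = j := fun j => by linear_combination (-j) * hc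
  set s : ℂ := 1 / Real.sqrt (Fintype.card 𝔽)
  ext m
  simp only [mulVec, dotProduct, fourierMatrix, chirpMatrix, of_apply, Pi.smul_apply,
    smul_eq_mul]
  calc ∑ i, s * ψ (i * m) * ∑ j, s * ψ (c * (j - i) ^ 2 - 2⁻¹ * c * i ^ 2) * g j
      = ∑ j, s * s * g j * ∑ i, ψ (i * m) * ψ (c * (j - i) ^ 2 - 2⁻¹ * c * i ^ 2) := by
        simp_rw [mul_sum]
        rw [sum_comm]
        exact sum_congr rfl fun j _ => sum_congr rfl fun i _ => by ring
    _ = ∑ j, s * s * g j *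
          (ψ (c * (c * j - m) ^ 2 - 2⁻¹ * c * m ^ 2) * ∑ i, ψ (2⁻¹ * c * i ^ 2)) := by
        simp only [sum_addChar_mul_chirp_eq ψ hc h2]
    _ = s * (∑ i, ψ (2⁻¹ * c * i ^ 2)) *
          ∑ z, s * ψ (c * (z - m) ^ 2 - 2⁻¹ * c * m ^ 2) * g (-c * z) := by
        rw [← Equiv.sum_comp (Equiv.mulLeft₀ c hc0)
          (fun z => s * ψ (c * (z - m) ^ 2 - 2⁻¹ * c * m ^ 2) * g (-c * z)), mul_sum]
        simp only [Equiv.mulLeft₀_apply, hcc]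
        exact sum_congr rfl fun j _ => by ring

theorem chirpMatrix_mulVec_single_zero [DecidableEq 𝔽] (ψ : AddChar 𝔽 ℂ) (c : 𝔽)
    (h2 : (2 : 𝔽) ≠ 0) (i : 𝔽) :
    (chirpMatrix ψ c *ᵥ Pi.single 0 1) i =
      (1 / Real.sqrt (Fintype.card 𝔽) : ℂ) * ψ (2⁻¹ * c * i ^ 2) := by
  rw [mulVec_single_one, col_apply, chirpMatrix, of_apply]
  congr 2
  linear_combination (-(c * i ^ 2)) * mul_inv_cancel₀ h2

end Chirp

section DiscreteLog

variable {𝔽 : Type*} [Field 𝔽] [DecidableEq 𝔽] {a : 𝔽} {n : ℕ} {log : 𝔽 → ℕ} {θ : ℂ}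

noncomputable def logChar (log : 𝔽 → ℕ) (θ : ℂ) (x : ℕ) (z : 𝔽) : ℂ :=
  if z = 0 then 0 else θ ^ (x * log z)

@[simp]
theorem logChar_zero (x : ℕ) : logChar log θ x (0 : 𝔽) = 0 := if_pos rfl

theorem logChar_mul (ha : IsPrimitiveRoot a n) (hlog : ∀ z ≠ 0, log z < n ∧ a ^ log z = z)
    (hθ : θ ^ n = 1) (x : ℕ) (v w : 𝔽) :
    logChar log θ x (v * w) = logChar log θ x v * logChar log θ x w := by
  by_cases hv : v = 0
  · simp [logChar, hv]
  by_cases hw : w = 0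
  · simp [logChar, hw]
  have hn : n ≠ 0 := by have := (hlog 1 one_ne_zero).1; omega
  have hmod : log (v * w) ≡ log v + log w [MOD n] := by
    rw [← ha.pow_eq_pow_iff_modEq hn, pow_add, (hlog _ hv).2, (hlog _ hw).2,
      (hlog _ (mul_ne_zero hv hw)).2]
  simp only [logChar, hv, hw, mul_ne_zero hv hw, if_false, ← pow_add, ← mul_add]
  rw [pow_eq_pow_mod _ hθ, pow_eq_pow_mod (x * (log v + log w)) hθ, hmod.mul_left x]

theorem sum_conj_logChar_mul_logChar [Fintype 𝔽] (ha : IsPrimitiveRoot a n)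
    (hlog : ∀ z ≠ 0, log z < n ∧ a ^ log z = z) (hθ : IsPrimitiveRoot θ n) (x y : ℕ) :
    ∑ z, conj (logChar log θ x z) * logChar log θ y z =
      if x ≡ y [MOD n] then (n : ℂ) else 0 := by
  have hn : n ≠ 0 := by have := (hlog 1 one_ne_zero).1; omega
  rw [← hθ.sum_conj_pow_mul_pow x y, ← sum_erase univ (a := 0) (by simp)]
  refine sum_nbij' log (a ^ ·) (fun z hz => ?_) (fun t _ => ?_) (fun z hz => ?_)
    (fun t ht => ?_) (fun z hz => ?_)
  · exact mem_range.2 (hlog z (ne_of_mem_erase hz)).1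
  · exact mem_erase.2 ⟨pow_ne_zero _ (ha.ne_zero hn), mem_univ _⟩
  · exact (hlog z (ne_of_mem_erase hz)).2
  · have h := hlog (a ^ t) (pow_ne_zero _ (ha.ne_zero hn))
    exact ha.pow_inj h.1 (mem_range.1 ht) h.2
  · simp [logChar, ne_of_mem_erase hz]

noncomputable def charFamily (n : ℕ) (log : 𝔽 → ℕ) (θ : ℂ) (x : ℕ) : 𝔽 → ℂ :=
  if x = 0 then Pi.single 0 1 else (1 / Real.sqrt n : ℂ) • logChar log θ x

theorem inner_charFamily [Fintype 𝔽] (ha : IsPrimitiveRoot a n)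
    (hlog : ∀ z ≠ 0, log z < n ∧ a ^ log z = z) (hθ : IsPrimitiveRoot θ n) {x y : ℕ}
    (hx : x ≤ n) (hy : y ≤ n) :
    inner ℂ (WithLp.toLp 2 (charFamily n log θ x)) (WithLp.toLp 2 (charFamily n log θ y)) =
      if x = y then 1 else 0 := by
  rw [EuclideanSpace.inner_toLp_toLp, dotProduct_comm]
  simp only [dotProduct, Pi.star_apply, RCLike.star_def]
  rcases Nat.eq_zero_or_pos x with rfl | hx0 <;> rcases Nat.eq_zero_or_pos y with rfl | hy0
  · simp [charFamily, Pi.single_apply]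
  · simp [charFamily, Pi.single_apply, hy0.ne, hy0.ne']
  · simp [charFamily, Pi.single_apply, hx0.ne']
  have hmod : x ≡ y [MOD n] ↔ x = y :=
    ⟨fun h => h.eq_of_abs_lt (abs_sub_lt_iff.2 ⟨by omega, by omega⟩), fun h => h ▸ rfl⟩
  simp only [charFamily, hx0.ne', hy0.ne', if_false, Pi.smul_apply, smul_eq_mul, map_mul,
    Complex.conj_one_div_sqrt, mul_mul_mul_comm, ← mul_sum,
    Complex.one_div_sqrt_mul_one_div_sqrt, sum_conj_logChar_mul_logChar ha hlog hθ, hmod]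
  split_ifs
  · exact one_div_mul_cancel (Nat.cast_ne_zero.2 (by omega))
  · simp

theorem exists_charFamily_comp_mul_eq_smul (ha : IsPrimitiveRoot a n)
    (hlog : ∀ z ≠ 0, log z < n ∧ a ^ log z = z) (hθ : θ ^ n = 1) (x : ℕ) {u : 𝔽} (hu : u ≠ 0) :
    ∃ μ : ℂ, (fun z => charFamily n log θ x (u * z)) = μ • charFamily n log θ x := by
  by_cases hx : x = 0
  · refine ⟨1, funext fun z => ?_⟩
    simp [charFamily, hx, Pi.single_apply, hu]
  · refine ⟨logChar log θ x u, funext fun z => ?_⟩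
    simp only [charFamily, hx, if_false, Pi.smul_apply, smul_eq_mul, logChar_mul ha hlog hθ]
    ring

end DiscreteLog

section Eigenbasis

variable {𝔽 : Type*} [Field 𝔽] [Fintype 𝔽] [DecidableEq 𝔽] {a : 𝔽} {n : ℕ} {log : 𝔽 → ℕ}
  {θ : ℂ} {ψ : AddChar 𝔽 ℂ} {c : 𝔽}

theorem orthonormal_chirpMatrix_mulVec_charFamily (hψ : ψ.IsPrimitive) (hc : 2 * c ≠ 0)
    (ha : IsPrimitiveRoot a n) (hlog : ∀ z ≠ 0, log z < n ∧ a ^ log z = z)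
    (hθ : IsPrimitiveRoot θ n) {m : ℕ} (hm : m ≤ n + 1) :
    Orthonormal ℂ fun x : Fin m => WithLp.toLp 2 (chirpMatrix ψ c *ᵥ charFamily n log θ x) := by
  refine orthonormal_iff_ite.2 fun x y => ?_
  rw [inner_toLp_mulVec_toLp_mulVec (chirpMatrix_mem_unitaryGroup hψ hc),
    inner_charFamily ha hlog hθ (by have := x.isLt; omega) (by have := y.isLt; omega)]
  simp only [Fin.val_inj]

theorem exists_fourierMatrix_mulVec_eq_smul (hc : c ^ 2 = -1) (h2 : (2 : 𝔽) ≠ 0)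
    (ha : IsPrimitiveRoot a n) (hlog : ∀ z ≠ 0, log z < n ∧ a ^ log z = z) (hθ : θ ^ n = 1)
    (x : ℕ) : ∃ μ : ℂ, fourierMatrix ψ *ᵥ (chirpMatrix ψ c *ᵥ charFamily n log θ x) =
      μ • chirpMatrix ψ c *ᵥ charFamily n log θ x := by
  have hc0 : -c ≠ 0 := by rintro h; simp [neg_eq_zero.1 h] at hc
  obtain ⟨μ, hμ⟩ := exists_charFamily_comp_mul_eq_smul ha hlog hθ x hc0
  exact ⟨_, by rw [fourierMatrix_mulVec_chirpMatrix_mulVec ψ hc h2, hμ, mulVec_smul, smul_smul]⟩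

end Eigenbasis

theorem sum_Icc_pow_log_mul_eq_sum_logChar {p : ℕ} [Fact p.Prime] (log : ZMod p → ℕ) (θ : ℂ)
    (x : ℕ) (f : ZMod p → ℂ) :
    ∑ j ∈ Icc 1 (p - 1), θ ^ (x * log j) * f j = ∑ z, logChar log θ x z * f z := by
  have hval : ∀ j ∈ Icc 1 (p - 1), (j : ZMod p).val = j := fun j hj =>
    ZMod.val_cast_of_lt (by have := mem_Icc.1 hj; omega)
  have hne : ∀ j ∈ Icc 1 (p - 1), (j : ZMod p) ≠ 0 := fun j hj h => by
    have := hval j hj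
    rw [h, ZMod.val_zero] at this
    have := mem_Icc.1 hj
    omega
  rw [← sum_erase univ (a := 0) (by simp)]
  refine sum_nbij' (fun j => (j : ZMod p)) ZMod.val
    (fun j hj => mem_erase.2 ⟨hne j hj, mem_univ _⟩) (fun z hz => ?_) hval
    (fun z _ => ZMod.natCast_zmod_val z) (fun j hj => by simp [logChar, hne j hj])
  have := (ZMod.val_ne_zero z).2 (ne_of_mem_erase hz)
  exact mem_Icc.2 ⟨by omega, by have := ZMod.val_lt z; omega⟩

theorem chirpMatrix_mulVec_charFamily_apply {p : ℕ} [hp : Fact p.Prime]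
    (ψ : AddChar (ZMod p) ℂ) (c : ZMod p) (log : ZMod p → ℕ) (θ : ℂ) {x : ℕ} (hx : x ≠ 0)
    (i : ZMod p) :
    (chirpMatrix ψ c *ᵥ charFamily (p - 1) log θ x) i =
      (1 / Real.sqrt ((p : ℝ) * ((p : ℝ) - 1)) : ℂ) * ∑ j ∈ Icc 1 (p - 1),
        θ ^ (x * log j) * ψ (c * ((j : ZMod p) - i) ^ 2 - 2⁻¹ * c * i ^ 2) := by
  have hsqrt : (1 / Real.sqrt ((p : ℝ) * ((p : ℝ) - 1)) : ℂ) =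
      (1 / Real.sqrt p : ℂ) * (1 / Real.sqrt ((p - 1 : ℕ) : ℝ) : ℂ) := by
    rw [Nat.cast_pred hp.out.pos, Real.sqrt_mul (Nat.cast_nonneg _)]
    push_cast
    ring
  rw [sum_Icc_pow_log_mul_eq_sum_logChar log θ x
    fun z => ψ (c * (z - i) ^ 2 - 2⁻¹ * c * i ^ 2), hsqrt, mul_sum]
  simp only [mulVec, dotProduct, chirpMatrix, charFamily, hx, if_false, Pi.smul_apply,
    smul_eq_mul, of_apply, ZMod.card]
  exact sum_congr rfl fun j _ => by ring

end FourierEigenbasis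

open FourierEigenbasis in
/-- Φ_p = {φ_x : 0 ≤ x ≤ p−1} is an orthonormal basis of ℂ(F_p) and
every φ_x is an eigenvector of the discrete Fourier transform F. -/
theorem phi_orthonormal_basis_of_eigenvectors (p : ℕ) [Fact p.Prime] (hp4 : p % 4 = 1)
    (a : ZMod p) (ha : orderOf a = p - 1)
    (log : ZMod p → ℕ)
    (hlog : ∀ j : ZMod p, j ≠ 0 → log j ≤ p - 2 ∧ a ^ log j = j)
    (θ η : ℂ)
    (hθ : θ = Complex.exp (2 * Real.pi * Complex.I / ((p : ℂ) - 1)))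
    (hη : η = Complex.exp (2 * Real.pi * Complex.I / (p : ℂ)))
    (k : ℕ) (hk : k = (p - 1) / 4)
    (F : EuclideanSpace ℂ (ZMod p) → EuclideanSpace ℂ (ZMod p))
    (hF : ∀ φ : EuclideanSpace ℂ (ZMod p), ∀ j : ZMod p,
      F φ j = (1 / Real.sqrt p : ℂ) * ∑ i : ZMod p, η ^ (i * j).val * φ i)
    (φ : Fin p → EuclideanSpace ℂ (ZMod p))
    (hφ0 : ∀ i : ZMod p,
      φ 0 i = (1 / Real.sqrt p : ℂ) * η ^ (2⁻¹ * a ^ k * i ^ 2).val)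
    (hφx : ∀ x : Fin p, x ≠ 0 → ∀ i : ZMod p,
      φ x i = (1 / Real.sqrt ((p : ℝ) * ((p : ℝ) - 1)) : ℂ) *
        ∑ j ∈ Finset.Icc 1 (p - 1),
          θ ^ ((x : ℕ) * log (j : ZMod p)) *
          η ^ (a ^ k * ((j : ZMod p) - i) ^ 2 - 2⁻¹ * a ^ k * i ^ 2).val) :
    (∃ b : OrthonormalBasis (Fin p) ℂ (EuclideanSpace ℂ (ZMod p)),
      ∀ x, b x = φ x) ∧
    (∀ x : Fin p, ∃ μ : ℂ, F (φ x) = μ • φ x) := by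
  have hp5 : 5 ≤ p := by have := (Fact.out : p.Prime).two_le; omega
  set c := a ^ k
  set ψ := ZMod.stdAddChar (N := p)
  have hηψ : ∀ z : ZMod p, η ^ z.val = ψ z := fun z => by
    rw [hη, ZMod.stdAddChar_eq_exp_pow_val]
  have ha' : IsPrimitiveRoot a (p - 1) := ha ▸ IsPrimitiveRoot.orderOf a
  have hlog' : ∀ z ≠ 0, log z < p - 1 ∧ a ^ log z = z := fun z hz =>
    ⟨by have := (hlog z hz).1; omega, (hlog z hz).2⟩
  have hθ' : IsPrimitiveRoot θ (p - 1) := by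
    rw [hθ, ← Nat.cast_pred (by omega : 0 < p)]
    exact Complex.isPrimitiveRoot_exp _ (by omega)
  have hc : c ^ 2 = -1 := (show p - 1 = 4 * k by omega) ▸ ha' |>.pow_sq_eq_neg_one (by omega)
  have h2 : (2 : ZMod p) ≠ 0 := Ring.two_ne_zero (by rw [ZMod.ringChar_zmod_n]; omega)
  have hc0 : c ≠ 0 := by rintro h; simp [h] at hc
  simp only [hηψ] at hF hφ0 hφx
  have hFW : ∀ v, F v = WithLp.toLp 2 (fourierMatrix ψ *ᵥ WithLp.ofLp v) := fun v => by
    ext j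
    simp [hF, fourierMatrix, mulVec, dotProduct, mul_sum, mul_assoc]
  have hφW :
      φ = fun x : Fin p => WithLp.toLp 2 (chirpMatrix ψ c *ᵥ charFamily (p - 1) log θ x) := by
    funext x
    ext i
    by_cases hx : x = 0
    · subst hx
      simp [hφ0, charFamily, chirpMatrix_mulVec_single_zero ψ c h2, ZMod.card]
    · rw [hφx x hx, PiLp.toLp_apply,
        chirpMatrix_mulVec_charFamily_apply ψ c log θ (Fin.val_ne_zero_iff.2 hx)]
  have horth : Orthonormal ℂ φ := hφW ▸ orthonormal_chirpMatrix_mulVec_charFamily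
    (ZMod.isPrimitive_stdAddChar p) (mul_ne_zero h2 hc0) ha' hlog' hθ' (by omega)
  refine ⟨⟨.mk horth (horth.linearIndependent.span_eq_top_of_card_eq_finrank' (by simp)).ge,
    fun x => by simp⟩, fun x => ?_⟩
  obtain ⟨μ, hμ⟩ := exists_fourierMatrix_mulVec_eq_smul hc h2 ha' hlog' hθ'.pow_eq_one x
  refine ⟨μ, ?_⟩
  rw [hFW, hφW, WithLp.ofLp_toLp, hμ, WithLp.toLp_smul]
end

section
/- For every integer x with 0 ≤ x ≤ p−1, the composed operator S_{2⁻¹a^k} ∘ N_{4⁻¹a^k} ∘ F ∘ N_{2a^{3k}} applied to ψ_x equals σ(2⁻¹a^k) · φ_x, where σ is the Legendre symbol mod p. -/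
/-!
With `c = a ^ k`, a square root of `-1` in `𝔽_p`, one has `a ^ (3k) = -c` and `(2⁻¹ c)⁻¹ = -2c`,
so evaluating the composite at `i` reads the Fourier transform at `-2c i`. Completing the square,
the three quadratic phases met there add up to `c (z - i)² - 2⁻¹ c i²`, so the composite sends any
`ψ` to `σ(2⁻¹ c)` times `i ↦ p^{-1/2} ∑_z η^{c (z - i)² - 2⁻¹ c i²} ψ z`. For `ψ_0` this sum
collapses to its `z = 0` term; for `ψ_x` it runs over `𝔽_p^*` and is the sum defining `φ_x`.
-/

theorem sq_pow_eq_neg_one_of_orderOf_eq {R : Type*} [CommRing R] [IsDomain R] {a : R} {k : ℕ}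
    (hk : 0 < k) (ha : orderOf a = 4 * k) : (a ^ k) ^ 2 = -1 := by
  have h := (IsPrimitiveRoot.orderOf a).pow_of_dvd (p := 2 * k) (by omega) ⟨2, by rw [ha]; ring⟩
  rw [ha, show 4 * k = 2 * (2 * k) by ring, Nat.mul_div_cancel _ (by omega)] at h
  rw [← pow_mul, mul_comm]
  exact h.eq_neg_one_of_two_right

theorem chirp_phase_eq {K : Type*} [Field K] (h2 : (2 : K) ≠ 0) {c : K} (hc : c ^ 2 = -1)
    (z i : K) :
    -(2⁻¹ * (4⁻¹ * c) * (2 * -c * i) ^ 2) + z * (2 * -c * i) + -(2⁻¹ * (2 * -c) * z ^ 2) =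
      c * (z - i) ^ 2 - 2⁻¹ * c * i ^ 2 := by
  have h4 : (4 : K) ≠ 0 := by simpa [show (4 : K) = 2 * 2 by norm_num] using h2
  field_simp
  linear_combination (-4 * c * i ^ 2) * hc

theorem ZMod.sum_Icc_natCast_eq_sum_compl_zero {M : Type*} [AddCommMonoid M] {n : ℕ} [NeZero n]
    (f : ZMod n → M) : ∑ j ∈ Finset.Icc 1 (n - 1), f j = ∑ z ∈ {0}ᶜ, f z := by
  refine Finset.sum_nbij' (fun j : ℕ => (j : ZMod n)) ZMod.val ?_ ?_ ?_ ?_ fun _ _ => rfl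
  · intro j hj
    rw [Finset.mem_Icc] at hj
    rw [Finset.mem_compl, Finset.mem_singleton, ZMod.natCast_eq_zero_iff]
    intro hd
    have := Nat.le_of_dvd (by omega) hd
    omega
  · intro z hz
    rw [Finset.mem_compl, Finset.mem_singleton, ← ZMod.val_eq_zero] at hz
    rw [Finset.mem_Icc]
    have := ZMod.val_lt z
    omega
  · intro j hj
    rw [Finset.mem_Icc] at hj
    exact ZMod.val_cast_of_lt (by omega)
  · intro z _
    exact ZMod.natCast_zmod_val z

theorem oscillator_composite_apply {p : ℕ} [Fact p.Prime] (h2 : (2 : ZMod p) ≠ 0)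
    {η : ℂ} (hηp : η ^ p = 1)
    {S : ZMod p → (ZMod p → ℂ) → (ZMod p → ℂ)}
    (hS : ∀ c : ZMod p, ∀ φ : ZMod p → ℂ, ∀ i : ZMod p,
      S c φ i = (legendreSym p c.val : ℂ) * φ (c⁻¹ * i))
    {N : ZMod p → (ZMod p → ℂ) → (ZMod p → ℂ)}
    (hN : ∀ b : ZMod p, ∀ φ : ZMod p → ℂ, ∀ i : ZMod p,
      N b φ i = η ^ (-(2⁻¹ * b * i ^ 2)).val * φ i)
    {F : (ZMod p → ℂ) → (ZMod p → ℂ)}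
    (hF : ∀ φ : ZMod p → ℂ, ∀ j : ZMod p,
      F φ j = (1 / Real.sqrt p : ℂ) * ∑ i : ZMod p, η ^ (i * j).val * φ i)
    {c : ZMod p} (hc : c ^ 2 = -1) (ψ : ZMod p → ℂ) (i : ZMod p) :
    S (2⁻¹ * c) (N (4⁻¹ * c) (F (N (2 * -c) ψ))) i =
      (legendreSym p (2⁻¹ * c).val : ℂ) *
        ((1 / Real.sqrt p : ℂ) * ∑ z, η ^ (c * (z - i) ^ 2 - 2⁻¹ * c * i ^ 2).val * ψ z) := by
  have hinv : (2⁻¹ * c)⁻¹ = 2 * -c :=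
    inv_eq_of_mul_eq_one_right (by field_simp; linear_combination -hc)
  rw [hS, hinv, hN, hF, mul_left_comm _ (1 / _ : ℂ), Finset.mul_sum]
  congr 2
  refine Finset.sum_congr rfl fun z _ => ?_
  rw [hN, ← mul_assoc, ← mul_assoc]
  simp only [← AddChar.zmodChar_apply hηp, ← AddChar.map_add_eq_mul]
  rw [chirp_phase_eq h2 hc]

theorem oscillator_transform_formula_general (p : ℕ) [Fact p.Prime] (hp4 : p % 4 = 1)
    (a : ZMod p) (ha : orderOf a = p - 1)
    (log : ZMod p → ℕ)
    (θ η : ℂ)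
    (hη : η = Complex.exp (2 * Real.pi * Complex.I / (p : ℂ)))
    (k : ℕ) (hk : k = (p - 1) / 4)
    (S : ZMod p → (ZMod p → ℂ) → (ZMod p → ℂ))
    (hS : ∀ c : ZMod p, ∀ φ : ZMod p → ℂ, ∀ i : ZMod p,
      S c φ i = (legendreSym p c.val : ℂ) * φ (c⁻¹ * i))
    (N : ZMod p → (ZMod p → ℂ) → (ZMod p → ℂ))
    (hN : ∀ b : ZMod p, ∀ φ : ZMod p → ℂ, ∀ i : ZMod p,
      N b φ i = η ^ (-(2⁻¹ * b * i ^ 2)).val * φ i)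
    (F : (ZMod p → ℂ) → (ZMod p → ℂ))
    (hF : ∀ φ : ZMod p → ℂ, ∀ j : ZMod p,
      F φ j = (1 / Real.sqrt p : ℂ) * ∑ i : ZMod p, η ^ (i * j).val * φ i)
    (ψ : Fin p → ZMod p → ℂ)
    (hψ00 : ψ 0 0 = 1)
    (hψ0 : ∀ i : ZMod p, i ≠ 0 → ψ 0 i = 0)
    (hψx0 : ∀ x : Fin p, x ≠ 0 → ψ x 0 = 0)
    (hψx : ∀ x : Fin p, x ≠ 0 → ∀ i : ZMod p, i ≠ 0 →
      ψ x i = (1 / Real.sqrt ((p : ℝ) - 1) : ℂ) * θ ^ ((x : ℕ) * log i))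
    (φ : Fin p → ZMod p → ℂ)
    (hφ0 : ∀ i : ZMod p,
      φ 0 i = (1 / Real.sqrt p : ℂ) * η ^ (2⁻¹ * a ^ k * i ^ 2).val)
    (hφx : ∀ x : Fin p, x ≠ 0 → ∀ i : ZMod p,
      φ x i = (1 / Real.sqrt ((p : ℝ) * ((p : ℝ) - 1)) : ℂ) *
        ∑ j ∈ Finset.Icc 1 (p - 1),
          θ ^ ((x : ℕ) * log (j : ZMod p)) *
          η ^ (a ^ k * ((j : ZMod p) - i) ^ 2 - 2⁻¹ * a ^ k * i ^ 2).val) :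
    ∀ x : Fin p,
      S (2⁻¹ * a ^ k) (N (4⁻¹ * a ^ k) (F (N (2 * a ^ (3 * k)) (ψ x)))) =
        (legendreSym p (2⁻¹ * a ^ k : ZMod p).val : ℂ) • φ x := by
  intro x
  have hp : 1 < p := (Fact.out : p.Prime).one_lt
  have h2 : (2 : ZMod p) ≠ 0 := Ring.two_ne_zero (by rw [ZMod.ringChar_zmod_n]; omega)
  have hηp : η ^ p = 1 := hη ▸ (Complex.isPrimitiveRoot_exp p (by omega)).pow_eq_one
  have hc : (a ^ k) ^ 2 = -1 := sq_pow_eq_neg_one_of_orderOf_eq (by omega) (by omega)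
  have h3k : a ^ (3 * k) = -a ^ k := by rw [mul_comm, pow_mul, pow_succ, hc, neg_one_mul]
  funext i
  rw [h3k, oscillator_composite_apply h2 hηp hS hN hF hc, Pi.smul_apply, smul_eq_mul]
  congr 1
  rcases eq_or_ne x 0 with rfl | hx
  · rw [hφ0, Fintype.sum_eq_single 0 fun z hz => by rw [hψ0 z hz, mul_zero], hψ00, mul_one]
    congr 3
    field_simp
    ring
  · have hsum := ZMod.sum_Icc_natCast_eq_sum_compl_zero fun z : ZMod p =>
      θ ^ ((x : ℕ) * log z) * η ^ (a ^ k * (z - i) ^ 2 - 2⁻¹ * a ^ k * i ^ 2).val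
    rw [hφx x hx, hsum, Fintype.sum_eq_add_sum_compl 0, hψx0 x hx, mul_zero, zero_add,
      Real.sqrt_mul (Nat.cast_nonneg p), Finset.mul_sum, Finset.mul_sum]
    refine Finset.sum_congr rfl fun z hz => ?_
    rw [hψx x hx z (by simpa using hz)]
    push_cast
    ring

/-- For 0 ≤ x ≤ p−1,
(S_{2⁻¹a^k} ∘ N_{4⁻¹a^k} ∘ F ∘ N_{2a^{3k}}) ψ_x = σ(2⁻¹a^k) · φ_x. -/
theorem oscillator_transform_formula (p : ℕ) [Fact p.Prime] (hp4 : p % 4 = 1)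
    (a : ZMod p) (ha : orderOf a = p - 1)
    (log : ZMod p → ℕ)
    (hlog : ∀ j : ZMod p, j ≠ 0 → log j ≤ p - 2 ∧ a ^ log j = j)
    (θ η : ℂ)
    (hθ : θ = Complex.exp (2 * Real.pi * Complex.I / ((p : ℂ) - 1)))
    (hη : η = Complex.exp (2 * Real.pi * Complex.I / (p : ℂ)))
    (k : ℕ) (hk : k = (p - 1) / 4)
    (S : ZMod p → (ZMod p → ℂ) → (ZMod p → ℂ))
    (hS : ∀ c : ZMod p, ∀ φ : ZMod p → ℂ, ∀ i : ZMod p,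
      S c φ i = (legendreSym p c.val : ℂ) * φ (c⁻¹ * i))
    (N : ZMod p → (ZMod p → ℂ) → (ZMod p → ℂ))
    (hN : ∀ b : ZMod p, ∀ φ : ZMod p → ℂ, ∀ i : ZMod p,
      N b φ i = η ^ (-(2⁻¹ * b * i ^ 2)).val * φ i)
    (F : (ZMod p → ℂ) → (ZMod p → ℂ))
    (hF : ∀ φ : ZMod p → ℂ, ∀ j : ZMod p,
      F φ j = (1 / Real.sqrt p : ℂ) * ∑ i : ZMod p, η ^ (i * j).val * φ i)
    (ψ : Fin p → ZMod p → ℂ)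
    (hψ00 : ψ 0 0 = 1)
    (hψ0 : ∀ i : ZMod p, i ≠ 0 → ψ 0 i = 0)
    (hψx0 : ∀ x : Fin p, x ≠ 0 → ψ x 0 = 0)
    (hψx : ∀ x : Fin p, x ≠ 0 → ∀ i : ZMod p, i ≠ 0 →
      ψ x i = (1 / Real.sqrt ((p : ℝ) - 1) : ℂ) * θ ^ ((x : ℕ) * log i))
    (φ : Fin p → ZMod p → ℂ)
    (hφ0 : ∀ i : ZMod p,
      φ 0 i = (1 / Real.sqrt p : ℂ) * η ^ (2⁻¹ * a ^ k * i ^ 2).val)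
    (hφx : ∀ x : Fin p, x ≠ 0 → ∀ i : ZMod p,
      φ x i = (1 / Real.sqrt ((p : ℝ) * ((p : ℝ) - 1)) : ℂ) *
        ∑ j ∈ Finset.Icc 1 (p - 1),
          θ ^ ((x : ℕ) * log (j : ZMod p)) *
          η ^ (a ^ k * ((j : ZMod p) - i) ^ 2 - 2⁻¹ * a ^ k * i ^ 2).val) :
    ∀ x : Fin p,
      S (2⁻¹ * a ^ k) (N (4⁻¹ * a ^ k) (F (N (2 * a ^ (3 * k)) (ψ x)))) =
        (legendreSym p (2⁻¹ * a ^ k : ZMod p).val : ℂ) • φ x :=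
  oscillator_transform_formula_general p hp4 a ha log θ η hη k hk S hS N hN F hF ψ hψ00 hψ0 hψx0 hψx
    φ hφ0 hφx
end
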